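/- arXiv:1312.2046 — 3 statements merged into one kernel-verified Lean document; each statement's English description precedes it below -/
import Mathlib

section
/- Let D ∈ End(R^d) with 1/2 < λ_D and Λ_D < 1. Then ∫_{0}^{∞} ||(1+u)^{D−I/2} − u^{D−I/2}||² du < ∞. -/
/-!
Put `B = D - I/2`, whose eigenvalues have real parts in `(0, c)` for some `c < 1/2`. Since
`exp A` is a polynomial in `A`, its spectrum is `exp (spectrum A)`; so when every eigenvalue of
`A` has negative real part, Gelfand's formula makes the powers of `exp A`, and hence `exp (t A)`
for `t ≥ 0`, bounded. Applied to `-B` and to `B - c I` (after complexifying) this gives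
`‖u^B‖ = O(1)` on `(0, 1]` and `‖u^B‖ = O(u^c)` on `[1, ∞)`. The integrand is therefore
bounded near `0`, and since `d/du u^B = u⁻¹ u^B B`, the mean value theorem gives
`‖(1+u)^B - u^B‖ = O(u^(c-1))` at infinity, which is square integrable as `2c - 2 < -1`.
-/

open MeasureTheory

noncomputable def mpow {d : ℕ} (A : Matrix (Fin d) (Fin d) ℝ) (r : ℝ) :
    Matrix (Fin d) (Fin d) ℝ :=
  NormedSpace.exp (Real.log r • A)

noncomputable def mpowPos {d : ℕ} (A : Matrix (Fin d) (Fin d) ℝ) (x : ℝ) :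
    Matrix (Fin d) (Fin d) ℝ :=
  if 0 < x then mpow A x else 0

/-- Operator norm induced by the Euclidean norm. -/
noncomputable def opN {d : ℕ} (A : Matrix (Fin d) (Fin d) ℝ) : ℝ :=
  ‖Matrix.toEuclideanCLM (𝕜 := ℝ) A‖

/-- Minimal real part of the (complex) eigenvalues. -/
noncomputable def specMin {d : ℕ} (A : Matrix (Fin d) (Fin d) ℝ) : ℝ :=
  sInf (Complex.re '' spectrum ℂ (A.map (fun x => (x : ℂ))))

/-- Maximal real part of the (complex) eigenvalues. -/
noncomputable def specMax {d : ℕ} (A : Matrix (Fin d) (Fin d) ℝ) : ℝ :=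
  sSup (Complex.re '' spectrum ℂ (A.map (fun x => (x : ℂ))))

open NormedSpace Polynomial Filter Set
open scoped Matrix.Norms.L2Operator

theorem bddAbove_range_norm_pow_of_spectralRadius_lt_one {𝔸 : Type*} [NormedRing 𝔸]
    [NormedAlgebra ℂ 𝔸] [CompleteSpace 𝔸] {a : 𝔸} (ha : spectralRadius ℂ a < 1) :
    BddAbove (range fun n : ℕ => ‖a ^ n‖) := by
  refine IsBoundedUnder.bddAbove_range (isBoundedUnder_of_eventually_le (a := 1) ?_)
  have hroot :=
    (spectrum.pow_nnnorm_pow_one_div_tendsto_nhds_spectralRadius a).eventually_lt_const ha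
  filter_upwards [hroot, eventually_gt_atTop 0] with n hn hn0
  rw [one_div, ENNReal.rpow_inv_lt_iff (by positivity), ENNReal.one_rpow,
    ENNReal.coe_lt_one_iff] at hn
  exact (NNReal.coe_lt_one.mpr hn).le

theorem EuclideanSpace.norm_ofReal {k : Type*} [Fintype k] (x : EuclideanSpace ℝ k) :
    ‖(EuclideanSpace.equiv k ℂ).symm (fun i => (x i : ℂ))‖ = ‖x‖ := by
  simp [EuclideanSpace.norm_eq]

namespace Matrix
variable {n : Type*} [Fintype n] [DecidableEq n]

theorem exp_mulVec_of_mulVec_eq_smul {A : Matrix n n ℂ} {μ : ℂ} {v : n → ℂ}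
    (hv : A *ᵥ v = μ • v) : exp A *ᵥ v = Complex.exp μ • v := by
  have hpow (k : ℕ) : A ^ k *ᵥ v = μ ^ k • v := by
    induction k with
    | zero => simp
    | succ k ih => rw [pow_succ', ← mulVec_mulVec, ih, mulVec_smul, hv, smul_smul, pow_succ]
  have hA := (expSeries_summable' (𝕂 := ℂ) A).hasSum.map (mulVec.addMonoidHomLeft v)
    (continuous_id.matrix_mulVec continuous_const)
  have hμ := (expSeries_summable' (𝕂 := ℂ) μ).hasSum.smul_const v
  rw [exp_eq_tsum ℂ, Complex.exp_eq_exp_ℂ, exp_eq_tsum ℂ]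
  refine hA.unique (hμ.congr_fun fun k => ?_)
  simp [mulVec.addMonoidHomLeft, smul_mulVec, hpow, smul_smul]

theorem exp_mem_adjoin (A : Matrix n n ℂ) : exp A ∈ Algebra.adjoin ℂ {A} := by
  let S := Subalgebra.toSubmodule (Algebra.adjoin ℂ {A})
  have hS : IsClosed (S : Set (Matrix n n ℂ)) := S.closed_of_finiteDimensional
  rw [exp_eq_tsum ℂ]
  refine hS.mem_of_tendsto (expSeries_summable' A).hasSum.tendsto_sum_nat
    (Eventually.of_forall fun k => S.sum_mem fun i _ => S.smul_mem _ ?_)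
  exact Subalgebra.pow_mem _ (Algebra.self_mem_adjoin_singleton ℂ A) i

theorem spectrum_exp_subset (A : Matrix n n ℂ) :
    spectrum ℂ (exp A) ⊆ Complex.exp '' spectrum ℂ A := by
  cases isEmpty_or_nonempty n
  · simp [spectrum.of_subsingleton]
  obtain ⟨p, hp⟩ :=
    (AlgHom.mem_range _).mp (Algebra.adjoin_singleton_eq_range_aeval ℂ A ▸ exp_mem_adjoin A)
  rw [← hp, spectrum.map_polynomial_aeval]
  rintro _ ⟨μ, hμ, rfl⟩
  refine ⟨μ, hμ, ?_⟩
  rw [← spectrum_toLin', ← Module.End.hasEigenvalue_iff_mem_spectrum] at hμ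
  obtain ⟨v, hv⟩ := hμ.exists_hasEigenvector
  have hAv : A *ᵥ v = μ • v := by rw [← toLin'_apply]; exact hv.apply_eq_smul
  have haeval : aeval A p *ᵥ v = eval μ p • v := by
    rw [← toLin'_apply]
    change toLinAlgEquiv' (aeval A p) v = _
    rw [← aeval_algHom_apply]
    exact Module.End.aeval_apply_of_hasEigenvector hv
  rw [hp, exp_mulVec_of_mulVec_eq_smul hAv] at haeval
  exact smul_left_injective ℂ hv.2 haeval

theorem spectralRadius_exp_lt_one {A : Matrix n n ℂ} (hA : ∀ μ ∈ spectrum ℂ A, μ.re < 0) :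
    spectralRadius ℂ (exp A) < 1 := by
  nontriviality (Matrix n n ℂ)
  refine spectrum.spectralRadius_lt_of_forall_lt _ fun z hz => ?_
  obtain ⟨μ, hμ, rfl⟩ := spectrum_exp_subset A hz
  rw [← NNReal.coe_lt_coe, coe_nnnorm, Complex.norm_exp]
  simpa using hA μ hμ

theorem exists_norm_exp_smul_le_of_re_neg {A : Matrix n n ℂ} (hA : ∀ μ ∈ spectrum ℂ A, μ.re < 0) :
    ∃ C, ∀ t : ℝ, 0 ≤ t → ‖exp ((t : ℂ) • A)‖ ≤ C := by
  have hρ : spectralRadius ℂ (exp A) < 1 := spectralRadius_exp_lt_one hA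
  obtain ⟨C₁, hC₁⟩ := bddAbove_range_norm_pow_of_spectralRadius_lt_one hρ
  have hcont : Continuous fun s : ℝ => exp ((s : ℂ) • A) :=
    (continuous_iff_continuousAt.mpr fun z => (hasDerivAt_exp_smul_const A z).continuousAt).comp
      Complex.continuous_ofReal
  obtain ⟨C₂, hC₂⟩ := (isCompact_Icc (a := (0 : ℝ)) (b := 1)).exists_bound_of_continuousOn
    hcont.continuousOn
  refine ⟨C₁ * C₂, fun t ht => ?_⟩
  have hsplit : exp ((t : ℂ) • A) = exp A ^ ⌊t⌋₊ * exp (((t - ⌊t⌋₊ : ℝ) : ℂ) • A) := by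
    rw [← exp_nsmul, ← exp_add_of_commute _ _ ((Commute.refl A).smul_left _ |>.smul_right _)]
    congr 1
    push_cast
    rw [← Nat.cast_smul_eq_nsmul ℂ, ← add_smul, add_sub_cancel]
  have hfrac : t - ⌊t⌋₊ ∈ Icc (0 : ℝ) 1 :=
    ⟨sub_nonneg.mpr (Nat.floor_le ht), by linarith [Nat.lt_floor_add_one t]⟩
  have hC₁0 : 0 ≤ C₁ := (norm_nonneg _).trans (hC₁ ⟨0, rfl⟩)
  rw [hsplit]
  exact (norm_mul_le _ _).trans (mul_le_mul (hC₁ ⟨_, rfl⟩) (hC₂ _ hfrac) (norm_nonneg _) hC₁0)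

theorem l2_opNorm_le_l2_opNorm_map_ofReal {m : Type*} [Fintype m] (A : Matrix m n ℝ) :
    ‖A‖ ≤ ‖A.map ((↑) : ℝ → ℂ)‖ := by
  rw [l2_opNorm_def]
  refine ContinuousLinearMap.opNorm_le_bound _ (norm_nonneg _) fun x => ?_
  have :=
    (A.map ((↑) : ℝ → ℂ)).l2_opNorm_mulVec ((EuclideanSpace.equiv n ℂ).symm fun i => (x i : ℂ))
  rw [EuclideanSpace.norm_ofReal] at this
  refine le_of_eq_of_le ?_ this
  rw [← EuclideanSpace.norm_ofReal]
  congr 2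
  ext i
  simp [mulVec, dotProduct]

theorem map_ofReal_exp (A : Matrix n n ℝ) :
    (exp A).map ((↑) : ℝ → ℂ) = exp (A.map (↑)) :=
  map_exp_of_mem_ball (𝕂 := ℝ) Complex.ofRealHom.mapMatrix
    (continuous_id.matrix_map Complex.continuous_ofReal) A
    ((expSeries_radius_eq_top ℝ (Matrix n n ℝ)).symm ▸ edist_lt_top _ _)

theorem mem_spectrum_map_ofReal_sub_smul_one_iff (A : Matrix n n ℝ) (c : ℝ) {μ : ℂ} :
    μ ∈ spectrum ℂ ((A - c • 1).map ((↑) : ℝ → ℂ)) ↔ μ + c ∈ spectrum ℂ (A.map ((↑) : ℝ → ℂ)) := by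
  have : (A - c • 1).map ((↑) : ℝ → ℂ) = -algebraMap ℂ _ c + A.map (↑) := by
    ext i j
    by_cases h : i = j <;> simp [h, algebraMap_eq_diagonal, neg_add_eq_sub]
  rw [this, spectrum.add_mem_iff (a := A.map ((↑) : ℝ → ℂ))]

theorem exists_norm_exp_smul_le_of_re_neg_map_ofReal {A : Matrix n n ℝ}
    (hA : ∀ μ ∈ spectrum ℂ (A.map ((↑) : ℝ → ℂ)), μ.re < 0) :
    ∃ C, ∀ t : ℝ, 0 ≤ t → ‖exp (t • A)‖ ≤ C := by
  obtain ⟨C, hC⟩ := exists_norm_exp_smul_le_of_re_neg hA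
  refine ⟨C, fun t ht => (l2_opNorm_le_l2_opNorm_map_ofReal _).trans ?_⟩
  have hsmul : (t • A).map ((↑) : ℝ → ℂ) = (t : ℂ) • A.map (↑) := by ext; simp
  rw [map_ofReal_exp, hsmul]
  exact hC t ht

end Matrix

section mpow
open Matrix
variable {d : ℕ}

theorem mpow_inv (A : Matrix (Fin d) (Fin d) ℝ) (x : ℝ) : mpow A x⁻¹ = mpow (-A) x := by
  rw [mpow, mpow, Real.log_inv, neg_smul, smul_neg]

theorem mpow_sub_smul_one (A : Matrix (Fin d) (Fin d) ℝ) (c : ℝ) {x : ℝ} (hx : 0 < x) :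
    mpow A x = x ^ c • mpow (A - c • 1) x := by
  have hsplit : Real.log x • A = algebraMap ℝ _ (Real.log x * c) + Real.log x • (A - c • 1) := by
    rw [Algebra.algebraMap_eq_smul_one]
    module
  rw [mpow, mpow, hsplit, exp_add_of_commute _ _ (Algebra.commute_algebraMap_left _ _),
    ← algebraMap_exp_comm, ← Real.exp_eq_exp_ℝ, ← Real.rpow_def_of_pos hx,
    Algebra.algebraMap_eq_smul_one, smul_one_mul]

theorem exists_norm_mpow_le_rpow {A : Matrix (Fin d) (Fin d) ℝ} {c : ℝ}
    (hA : ∀ μ ∈ spectrum ℂ (A.map ((↑) : ℝ → ℂ)), μ.re < c) :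
    ∃ C, 0 ≤ C ∧ ∀ x : ℝ, 1 ≤ x → ‖mpow A x‖ ≤ C * x ^ c := by
  obtain ⟨C, hC⟩ := exists_norm_exp_smul_le_of_re_neg_map_ofReal (A := A - c • 1) fun μ hμ => by
    simpa using hA _ ((mem_spectrum_map_ofReal_sub_smul_one_iff A c).mp hμ)
  refine ⟨C, (norm_nonneg _).trans (hC 0 le_rfl), fun x hx => ?_⟩
  have hx0 : 0 < x := one_pos.trans_le hx
  rw [mpow_sub_smul_one A c hx0, norm_smul, Real.norm_of_nonneg (by positivity), mul_comm]
  exact mul_le_mul_of_nonneg_right (hC _ (Real.log_nonneg hx)) (by positivity)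

theorem exists_norm_mpow_le_of_le_one {A : Matrix (Fin d) (Fin d) ℝ}
    (hA : ∀ μ ∈ spectrum ℂ (A.map ((↑) : ℝ → ℂ)), 0 < μ.re) :
    ∃ C, ∀ x : ℝ, 0 < x → x ≤ 1 → ‖mpow A x‖ ≤ C := by
  obtain ⟨C, -, hC⟩ := exists_norm_mpow_le_rpow (A := -A) (c := 0) fun μ hμ => by
    rw [Matrix.map_neg _ Complex.ofReal_neg, ← spectrum.neg_eq] at hμ
    simpa using hA _ hμ
  refine ⟨C, fun x hx0 hx1 => ?_⟩
  simpa [mpow_inv] using hC x⁻¹ (one_le_inv₀ hx0 |>.mpr hx1)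

theorem hasDerivAt_mpow (A : Matrix (Fin d) (Fin d) ℝ) {x : ℝ} (hx : 0 < x) :
    HasDerivAt (mpow A) (x⁻¹ • (mpow A x * A)) x :=
  (hasDerivAt_exp_smul_const A (Real.log x)).scomp x (Real.hasDerivAt_log hx.ne')

theorem continuousOn_mpow (A : Matrix (Fin d) (Fin d) ℝ) : ContinuousOn (mpow A) (Ioi 0) :=
  fun _ hx => (hasDerivAt_mpow A hx).continuousAt.continuousWithinAt

theorem norm_mpow_add_one_sub_le (A : Matrix (Fin d) (Fin d) ℝ) {x M : ℝ} (hx : 0 < x)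
    (hM : ∀ s ∈ Icc x (x + 1), ‖mpow A s‖ ≤ M) :
    ‖mpow A (x + 1) - mpow A x‖ ≤ x⁻¹ * M * ‖A‖ := by
  have hderiv : ∀ s ∈ Icc x (x + 1),
      HasDerivWithinAt (mpow A) (s⁻¹ • (mpow A s * A)) (Icc x (x + 1)) s :=
    fun s hs => (hasDerivAt_mpow A (hx.trans_le hs.1)).hasDerivWithinAt
  have hbound : ∀ s ∈ Ico x (x + 1), ‖s⁻¹ • (mpow A s * A)‖ ≤ x⁻¹ * M * ‖A‖ := by
    intro s hs
    have hs0 : 0 < s := hx.trans_le hs.1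
    rw [norm_smul, norm_inv, Real.norm_of_nonneg hs0.le, mul_assoc]
    gcongr
    · exact hs.1
    · exact (norm_mul_le _ _).trans (by gcongr; exact hM s (Ico_subset_Icc_self hs))
  simpa using norm_image_sub_le_of_norm_deriv_le_segment' hderiv hbound (x + 1) (by simp)

theorem norm_mpow_add_one_sub_le_rpow {A : Matrix (Fin d) (Fin d) ℝ} {C c : ℝ} (hc : 0 ≤ c)
    (hC0 : 0 ≤ C) (hC : ∀ x : ℝ, 1 ≤ x → ‖mpow A x‖ ≤ C * x ^ c) {x : ℝ} (hx : 1 ≤ x) :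
    ‖mpow A (x + 1) - mpow A x‖ ≤ C * 2 ^ c * ‖A‖ * x ^ (c - 1) := by
  have hx0 : 0 < x := one_pos.trans_le hx
  have hM : ∀ s ∈ Icc x (x + 1), ‖mpow A s‖ ≤ C * 2 ^ c * x ^ c := fun s hs => by
    calc ‖mpow A s‖ ≤ C * s ^ c := hC s (hx.trans hs.1)
      _ ≤ C * (2 * x) ^ c := by gcongr <;> linarith [hs.1, hs.2]
      _ = C * 2 ^ c * x ^ c := by rw [Real.mul_rpow zero_le_two hx0.le, mul_assoc]
  calc ‖mpow A (x + 1) - mpow A x‖ ≤ x⁻¹ * (C * 2 ^ c * x ^ c) * ‖A‖ :=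
        norm_mpow_add_one_sub_le A hx0 hM
    _ = C * 2 ^ c * ‖A‖ * x ^ (c - 1) := by rw [Real.rpow_sub_one hx0.ne']; ring

end mpow

theorem integrableOn_Ioi_of_bounded_of_le_rpow {E : Type*} [NormedAddCommGroup E] {f : ℝ → E}
    {M K p : ℝ} (hf : ContinuousOn f (Ioi 0)) (h₀ : ∀ x ∈ Ioc 0 1, ‖f x‖ ≤ M)
    (h₁ : ∀ x ∈ Ioi 1, ‖f x‖ ≤ K * x ^ p) (hp : p < -1) : IntegrableOn f (Ioi 0) := by
  rw [← Ioc_union_Ioi_eq_Ioi zero_le_one]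
  refine IntegrableOn.union ?_ ?_
  · exact IntegrableOn.of_bound measure_Ioc_lt_top
      ((hf.mono Ioc_subset_Ioi_self).aestronglyMeasurable measurableSet_Ioc) M
      ((ae_restrict_iff' measurableSet_Ioc).mpr (ae_of_all _ h₀))
  · exact Integrable.mono' ((integrableOn_Ioi_rpow_of_lt hp one_pos).const_mul K)
      ((hf.mono (Ioi_subset_Ioi zero_le_one)).aestronglyMeasurable measurableSet_Ioi)
      ((ae_restrict_iff' measurableSet_Ioi).mpr (ae_of_all _ h₁))

theorem integrableOn_Ioi_sq_norm_of_bounded_of_le_rpow {E : Type*} [NormedAddCommGroup E]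
    {g : ℝ → E} {M K p : ℝ} (hg : ContinuousOn g (Ioi 0)) (h₀ : ∀ x ∈ Ioc 0 1, ‖g x‖ ≤ M)
    (h₁ : ∀ x ∈ Ioi 1, ‖g x‖ ≤ K * x ^ p) (hp : p < -2⁻¹) :
    IntegrableOn (fun x => ‖g x‖ ^ 2) (Ioi 0) := by
  refine integrableOn_Ioi_of_bounded_of_le_rpow (M := M ^ 2) (K := K ^ 2) (p := 2 * p)
    (hg.norm.pow 2) (fun x hx => ?_) (fun x hx => ?_) (by linarith)
  · rw [norm_pow, norm_norm]
    exact pow_le_pow_left₀ (norm_nonneg _) (h₀ x hx) 2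
  · have hx0 : (0 : ℝ) ≤ x := zero_le_one.trans (le_of_lt hx)
    rw [norm_pow, norm_norm, mul_comm 2 p, Real.rpow_mul hx0, Real.rpow_two, ← mul_pow]
    exact pow_le_pow_left₀ (norm_nonneg _) (h₁ x hx) 2

theorem re_mem_Icc_of_mem_spectrum_sub_smul_one {d : ℕ} {A : Matrix (Fin d) (Fin d) ℝ} {c : ℝ}
    {μ : ℂ} (hμ : μ ∈ spectrum ℂ ((A - c • 1).map ((↑) : ℝ → ℂ))) :
    μ.re ∈ Icc (specMin A - c) (specMax A - c) := by
  rw [Matrix.mem_spectrum_map_ofReal_sub_smul_one_iff] at hμ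
  have hfin := (A.map ((↑) : ℝ → ℂ)).finite_spectrum.image Complex.re
  have h₁ : specMin A ≤ (μ + c).re := csInf_le hfin.bddBelow ⟨_, hμ, rfl⟩
  have h₂ : (μ + c).re ≤ specMax A := le_csSup hfin.bddAbove ⟨_, hμ, rfl⟩
  simp only [Complex.add_re, Complex.ofReal_re] at h₁ h₂
  constructor <;> linarith

theorem opN_eq_norm {d : ℕ} (A : Matrix (Fin d) (Fin d) ℝ) : opN A = ‖A‖ := rfl

/-- `∫_0^∞ ‖(1+u)^{D-I/2} - u^{D-I/2}‖² du < ∞`. -/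
theorem mpow_increment_sq_integrable (d : ℕ) (D : Matrix (Fin d) (Fin d) ℝ)
    (hmin : 1 / 2 < specMin D) (hmax : specMax D < 1) :
    IntegrableOn
      (fun u => opN (mpow (D - (2⁻¹ : ℝ) • 1) (1 + u) - mpow (D - (2⁻¹ : ℝ) • 1) u) ^ 2)
      (Set.Ioi (0 : ℝ)) := by
  set B := D - (2⁻¹ : ℝ) • 1
  simp only [opN_eq_norm]
  obtain ⟨c, hc, hc2⟩ := exists_between
    (max_lt (by linarith : specMax D - 2⁻¹ < 2⁻¹) (by norm_num : (0 : ℝ) < 2⁻¹))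
  have hc0 : 0 ≤ c := (le_max_right _ _).trans hc.le
  have hre : ∀ μ ∈ spectrum ℂ (B.map ((↑) : ℝ → ℂ)), 0 < μ.re ∧ μ.re < c := fun μ hμ => by
    obtain ⟨h₁, h₂⟩ := re_mem_Icc_of_mem_spectrum_sub_smul_one hμ
    constructor <;> linarith [le_max_left (specMax D - 2⁻¹) 0]
  obtain ⟨C₀, hC₀⟩ := exists_norm_mpow_le_of_le_one fun μ hμ => (hre μ hμ).1
  obtain ⟨C, hC0, hC⟩ := exists_norm_mpow_le_rpow fun μ hμ => (hre μ hμ).2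
  have hsmall (u : ℝ) (hu : u ∈ Ioc 0 1) : ‖mpow B (1 + u) - mpow B u‖ ≤ C * 2 ^ c + C₀ := by
    refine (norm_sub_le _ _).trans
      (add_le_add ((hC _ (by linarith [hu.1])).trans ?_) (hC₀ u hu.1 hu.2))
    gcongr <;> linarith [hu.1, hu.2]
  have hlarge (u : ℝ) (hu : u ∈ Ioi 1) :
      ‖mpow B (1 + u) - mpow B u‖ ≤ C * 2 ^ c * ‖B‖ * u ^ (c - 1) := by
    rw [add_comm 1 u]
    exact norm_mpow_add_one_sub_le_rpow hc0 hC0 hC (le_of_lt hu)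
  have hcont : ContinuousOn (fun u => mpow B (1 + u) - mpow B u) (Ioi 0) :=
    ((continuousOn_mpow B).comp (continuousOn_const.add continuousOn_id)
      fun u (hu : 0 < u) => show 0 < 1 + u by linarith).sub (continuousOn_mpow B)
  exact integrableOn_Ioi_sq_norm_of_bounded_of_le_rpow hcont hsmall hlarge (by linarith)
end

section
/- Let D ∈ End(R^d) and 0 ≤ s̃ < t̃. Then ∫_0^{s̃} ||(t̃ − u)^{D−I/2} − (s̃ − u)^{D−I/2}||² du ≤ ||(t̃ − s̃)^{D−I/2}||² (t̃ − s̃) ∫_0^∞ ||(1+u)^{D−I/2} − u^{D−I/2}||² du. -/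
open MeasureTheory

/-!
Since `r ↦ r^A` is multiplicative on `(0, ∞)`, with `c = t - s` and `v = (s - u) / c` we get
`(t - u)^A - (s - u)^A = c^A ((1 + v)^A - v^A)`. Submultiplicativity of the operator norm bounds
the integrand by `‖c^A‖² ‖(1 + v)^A - v^A‖²`, and the substitution `u ↦ v` maps `u < s` onto
`v > 0` with Jacobian `c`.
-/

open Set

lemma mpow_mul {d : ℕ} (A : Matrix (Fin d) (Fin d) ℝ) {a b : ℝ} (ha : 0 < a) (hb : 0 < b) :
    mpow A (a * b) = mpow A a * mpow A b := by
  unfold mpow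
  rw [Real.log_mul ha.ne' hb.ne', add_smul]
  exact Matrix.exp_add_of_commute _ _ (((Commute.refl A).smul_left _).smul_right _)

lemma opN_mul_le {d : ℕ} (A B : Matrix (Fin d) (Fin d) ℝ) : opN (A * B) ≤ opN A * opN B := by
  unfold opN
  rw [map_mul]
  exact norm_mul_le _ _

lemma opN_mpow_mul_sub_le {d : ℕ} (A : Matrix (Fin d) (Fin d) ℝ) {c v : ℝ} (hc : 0 < c)
    (hv : 0 < v) :
    opN (mpow A (c * (1 + v)) - mpow A (c * v)) ≤
      opN (mpow A c) * opN (mpow A (1 + v) - mpow A v) := by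
  rw [mpow_mul A hc (by positivity), mpow_mul A hc hv, ← mul_sub]
  exact opN_mul_le _ _

lemma opN_mpow_sub_sq_le {d : ℕ} (A : Matrix (Fin d) (Fin d) ℝ) {s t u : ℝ} (hst : s < t)
    (hus : u < s) :
    opN (mpow A (t - u) - mpow A (s - u)) ^ 2 ≤
      opN (mpow A (t - s)) ^ 2 *
        opN (mpow A (1 + (s - u) / (t - s)) - mpow A ((s - u) / (t - s))) ^ 2 := by
  have hc : 0 < t - s := sub_pos.2 hst
  have hv : 0 < (s - u) / (t - s) := div_pos (sub_pos.2 hus) hc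
  have h_tu : t - u = (t - s) * (1 + (s - u) / (t - s)) := by field_simp; ring
  have h_su : s - u = (t - s) * ((s - u) / (t - s)) := by field_simp
  rw [← mul_pow, h_tu, h_su, mul_div_cancel_left₀ _ hc.ne']
  exact pow_le_pow_left₀ (norm_nonneg _) (opN_mpow_mul_sub_le A hc hv) 2

lemma setLIntegral_Iio_comp_sub_div (f : ℝ → ENNReal) (s : ℝ) {c : ℝ} (hc : 0 < c) :
    ∫⁻ u in Iio s, f ((s - u) / c) = ENNReal.ofReal c * ∫⁻ x in Ioi 0, f x := by
  have hc' : -c⁻¹ ≠ 0 := neg_ne_zero.2 (inv_ne_zero hc.ne')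
  set e : ℝ ≃ₜ ℝ := affineHomeomorph (-c⁻¹) (s / c) hc'
  have he : ⇑e = fun u ↦ (s - u) / c := by
    funext u
    change -c⁻¹ * u + s / c = (s - u) / c
    field_simp
    ring
  have h_map : Measure.map e volume = ENNReal.ofReal c • volume := by
    change Measure.map ((· + s / c) ∘ (-c⁻¹ * ·)) volume = _
    rw [← Measure.map_map (measurable_add_const _) (measurable_const_mul _),
      Real.map_volume_mul_left hc', Measure.map_smul, map_add_right_eq_self, inv_neg, inv_inv,
      abs_neg, abs_of_pos hc]
  have h_pre : e ⁻¹' Ioi 0 = Iio s := by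
    ext u
    simp [he, div_pos_iff_of_pos_right hc]
  have h_pres : MeasurePreserving e volume (ENNReal.ofReal c • volume) :=
    ⟨e.continuous.measurable, h_map⟩
  have h_subst := h_pres.setLIntegral_comp_preimage_emb e.measurableEmbedding f (Ioi 0)
  rw [h_pre, he] at h_subst
  rw [h_subst, Measure.restrict_smul, lintegral_smul_measure, smul_eq_mul]

theorem kernel_increment_scaling_general (d : ℕ) (D : Matrix (Fin d) (Fin d) ℝ)
    (s t : ℝ) (hst : s < t) :
    (∫⁻ u in Set.Ioc (0 : ℝ) s, ENNReal.ofReal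
        (opN (mpow (D - (2⁻¹ : ℝ) • 1) (t - u) - mpow (D - (2⁻¹ : ℝ) • 1) (s - u)) ^ 2))
      ≤ ENNReal.ofReal (opN (mpow (D - (2⁻¹ : ℝ) • 1) (t - s)) ^ 2 * (t - s)) *
        ∫⁻ u in Set.Ioi (0 : ℝ), ENNReal.ofReal
          (opN (mpow (D - (2⁻¹ : ℝ) • 1) (1 + u) - mpow (D - (2⁻¹ : ℝ) • 1) u) ^ 2) := by
  set A := D - (2⁻¹ : ℝ) • (1 : Matrix (Fin d) (Fin d) ℝ)
  set G : ℝ → ENNReal := fun v ↦ ENNReal.ofReal (opN (mpow A (1 + v) - mpow A v) ^ 2)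
  set C := ENNReal.ofReal (opN (mpow A (t - s)) ^ 2)
  have hc : 0 < t - s := sub_pos.2 hst
  calc (∫⁻ u in Ioc 0 s, ENNReal.ofReal (opN (mpow A (t - u) - mpow A (s - u)) ^ 2))
      = ∫⁻ u in Ioo 0 s, ENNReal.ofReal (opN (mpow A (t - u) - mpow A (s - u)) ^ 2) := by
        rw [restrict_Ioo_eq_restrict_Ioc]
    _ ≤ ∫⁻ u in Iio s, ENNReal.ofReal (opN (mpow A (t - u) - mpow A (s - u)) ^ 2) :=
        lintegral_mono_set Ioo_subset_Iio_self
    _ ≤ ∫⁻ u in Iio s, C * G ((s - u) / (t - s)) := by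
        refine setLIntegral_mono' measurableSet_Iio fun u hu ↦ ?_
        rw [← ENNReal.ofReal_mul (sq_nonneg _)]
        exact ENNReal.ofReal_le_ofReal (opN_mpow_sub_sq_le A hst hu)
    _ = C * (ENNReal.ofReal (t - s) * ∫⁻ v in Ioi 0, G v) := by
        rw [lintegral_const_mul' _ _ ENNReal.ofReal_ne_top, setLIntegral_Iio_comp_sub_div _ _ hc]
    _ = ENNReal.ofReal (opN (mpow A (t - s)) ^ 2 * (t - s)) * ∫⁻ v in Ioi 0, G v := by
        rw [ENNReal.ofReal_mul (sq_nonneg _), mul_assoc]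

/-- scaling bound for the integral of squared kernel increments,
stated with lower integrals so that the right-hand side may be infinite. -/
theorem kernel_increment_scaling (d : ℕ) (D : Matrix (Fin d) (Fin d) ℝ)
    (s t : ℝ) (hs : 0 ≤ s) (hst : s < t) :
    (∫⁻ u in Set.Ioc (0 : ℝ) s, ENNReal.ofReal
        (opN (mpow (D - (2⁻¹ : ℝ) • 1) (t - u) - mpow (D - (2⁻¹ : ℝ) • 1) (s - u)) ^ 2))
      ≤ ENNReal.ofReal (opN (mpow (D - (2⁻¹ : ℝ) • 1) (t - s)) ^ 2 * (t - s)) *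
        ∫⁻ u in Set.Ioi (0 : ℝ), ENNReal.ofReal
          (opN (mpow (D - (2⁻¹ : ℝ) • 1) (1 + u) - mpow (D - (2⁻¹ : ℝ) • 1) u) ^ 2) :=
  kernel_increment_scaling_general d D s t hst
end

section
/- Let D be a linear operator on R^d with 1/2 < λ_D and Λ_D < 1, and let W be a standard d-dimensional Brownian motion. Then the process X(t) = ∫_0^t (t−u)^{D − I/2} dW(u), t ≥ 0, is operator self-similar with exponent D: for every c > 0, the process (X(ct))_{t≥0} has the same finite-dimensional distributions as (c^D X(t))_{t≥0}. -/
open MeasureTheory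

open ProbabilityTheory Matrix

/-!
A finite family of random vectors is determined in law by its real linear functionals
(Cramér–Wold), and here every such functional is a centred Gaussian, fixed by its variance.
For `c > 0` the kernel scales as `(c x)^(D - I/2) = c^(-1/2) c^D x^(D - I/2)`, so the substitution
`u = c v` in the covariance integral turns the variance of `∑ ⟨a i, X (c t i)⟩` into the variance
of `∑ ⟨(c^D)ᵀ a i, X (t i)⟩ = ∑ ⟨a i, c^D X (t i)⟩`.
-/

theorem StrongDual.apply_eq_sum_dotProduct {ι κ : Type*} [Fintype ι] [Fintype κ]
    [DecidableEq ι] [DecidableEq κ] (L : StrongDual ℝ (ι → κ → ℝ)) (x : ι → κ → ℝ) :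
    L x = ∑ i, (fun j => L (Pi.single i (Pi.single j 1))) ⬝ᵥ x i := by
  have hx : x = ∑ i, ∑ j, x i j • Pi.single i (Pi.single j (1 : ℝ)) := by
    ext i j
    simp [Finset.sum_apply, Pi.single_apply, ite_apply]
  conv_lhs => rw [hx]
  simp [dotProduct, mul_comm]

theorem MeasureTheory.Measure.ext_of_map_sum_dotProduct {ι κ : Type*} [Fintype ι] [Fintype κ]
    {μ ν : Measure (ι → κ → ℝ)} [IsFiniteMeasure μ] [IsFiniteMeasure ν]
    (h : ∀ a : ι → κ → ℝ,
      μ.map (fun x => ∑ i, a i ⬝ᵥ x i) = ν.map (fun x => ∑ i, a i ⬝ᵥ x i)) :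
    μ = ν := by
  classical
  refine Measure.ext_of_charFunDual (funext fun L => ?_)
  have hL : ⇑L = fun x => ∑ i, (fun j => L (Pi.single i (Pi.single j 1))) ⬝ᵥ x i :=
    funext (StrongDual.apply_eq_sum_dotProduct L)
  rw [charFunDual_eq_charFun_map_one, charFunDual_eq_charFun_map_one, hL, h]

theorem Matrix.exp_smul_one {n : Type*} [Fintype n] [DecidableEq n] (r : ℝ) :
    NormedSpace.exp (r • (1 : Matrix n n ℝ)) = Real.exp r • 1 := by
  rw [smul_one_eq_diagonal, smul_one_eq_diagonal, exp_diagonal, Pi.exp_def, Real.exp_eq_exp_ℝ]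

section mpow

variable {d : ℕ} (A : Matrix (Fin d) (Fin d) ℝ)

theorem mpow_mul_s18 {x y : ℝ} (hx : 0 < x) (hy : 0 < y) :
    mpow A (x * y) = mpow A x * mpow A y := by
  rw [mpow, Real.log_mul hx.ne' hy.ne', add_smul]
  exact exp_add_of_commute _ _ (((Commute.refl A).smul_left _).smul_right _)

theorem mpow_sub_smul_one_s18 (s : ℝ) {r : ℝ} (hr : 0 < r) :
    mpow (A - s • 1) r = r ^ (-s) • mpow A r := by
  have hsplit : Real.log r • (A - s • 1) = Real.log r • A + (Real.log r * -s) • 1 := by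
    rw [smul_sub, smul_smul, mul_neg, neg_smul, sub_eq_add_neg]
  rw [mpow, hsplit, exp_add_of_commute _ _ ((Commute.one_right _).smul_right _),
    exp_smul_one, mul_smul_one, ← Real.rpow_def_of_pos hr, mpow]

theorem mpowPos_mul {c : ℝ} (hc : 0 < c) (x : ℝ) :
    mpowPos A (c * x) = mpow A c * mpowPos A x := by
  by_cases hx : 0 < x
  · rw [mpowPos, if_pos (mul_pos hc hx), mpowPos, if_pos hx, mpow_mul_s18 A hc hx]
  · rw [mpowPos, if_neg (fun h => hx (pos_of_mul_pos_right h hc.le)), mpowPos, if_neg hx,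
      mul_zero]

end mpow

/-- The covariance `E[⟨a, X s⟩ ⟨b, X t⟩]` of the Wiener integral `X t = ∫₀ᵗ K (t - u) dW u`. -/
noncomputable def wienerCov {n : Type*} [Fintype n] (K : ℝ → Matrix n n ℝ) (s t : ℝ)
    (a b : n → ℝ) : ℝ :=
  ∫ u in Set.Ioc 0 (min s t), (K (s - u))ᵀ *ᵥ a ⬝ᵥ (K (t - u))ᵀ *ᵥ b

theorem wienerCov_mul_mul {n : Type*} [Fintype n] {K : ℝ → Matrix n n ℝ} {M : Matrix n n ℝ}
    {c : ℝ} (hc : 0 < c) (hK : ∀ x, K (c * x) = c ^ (-(2⁻¹ : ℝ)) • (M * K x))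
    {s t : ℝ} (hs : 0 ≤ s) (ht : 0 ≤ t) (a b : n → ℝ) :
    wienerCov K (c * s) (c * t) a b = wienerCov K s t (Mᵀ *ᵥ a) (Mᵀ *ᵥ b) := by
  have hK' : ∀ (r x : ℝ) (v : n → ℝ),
      (K (c * r - c * x))ᵀ *ᵥ v = c ^ (-(2⁻¹ : ℝ)) • (K (r - x))ᵀ *ᵥ (Mᵀ *ᵥ v) := by
    intro r x v
    rw [← mul_sub, hK, transpose_smul, transpose_mul, smul_mulVec, mulVec_mulVec]
  have hsq : c ^ (-(2⁻¹ : ℝ)) * c ^ (-(2⁻¹ : ℝ)) = c⁻¹ := by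
    rw [← Real.rpow_add hc]
    norm_num [Real.rpow_neg_one]
  have hmin : 0 ≤ min s t := le_min hs ht
  rw [wienerCov, wienerCov, ← mul_min_of_nonneg _ _ hc.le,
    ← intervalIntegral.integral_of_le (mul_nonneg hc.le hmin),
    ← intervalIntegral.integral_of_le hmin, ← mul_zero c,
    ← intervalIntegral.smul_integral_comp_mul_left]
  simp only [hK', smul_dotProduct, dotProduct_smul, smul_eq_mul, ← mul_assoc, hsq,
    intervalIntegral.integral_const_mul, mul_inv_cancel_left₀ hc.ne', mul_zero]

/-- The Wiener integral `X(t) = ∫_0^t (t-u)^{D-I/2} dW(u)` is encoded through its distributional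
content: every finite linear functional of the process is a centred Gaussian whose variance is
given by the covariance kernel of the Wiener integral. -/
theorem RL_OFBM_operator_self_similar_general (d : ℕ) (D : Matrix (Fin d) (Fin d) ℝ)
    {Ω : Type*} [MeasurableSpace Ω] (μ : Measure Ω) [IsProbabilityMeasure μ]
    (X : ℝ → Ω → (Fin d → ℝ)) (hXmeas : ∀ t, Measurable (X t))
    (hgauss : ∀ (m : ℕ) (t : Fin m → ℝ), (∀ i, 0 ≤ t i) → ∀ a : Fin m → (Fin d → ℝ),
      Measure.map (fun ω => ∑ i, a i ⬝ᵥ X (t i) ω) μ =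
        gaussianReal 0
          (Real.toNNReal (∑ i, ∑ j,
            ∫ u in Set.Ioc (0 : ℝ) (min (t i) (t j)),
              ((mpowPos (D - (2⁻¹ : ℝ) • 1) (t i - u)).transpose.mulVec (a i)) ⬝ᵥ
                ((mpowPos (D - (2⁻¹ : ℝ) • 1) (t j - u)).transpose.mulVec (a j))))) :
    ∀ c : ℝ, 0 < c → ∀ (m : ℕ) (t : Fin m → ℝ), (∀ i, 0 ≤ t i) →
      Measure.map (fun ω => fun i => X (c * t i) ω) μ =
        Measure.map (fun ω => fun i => (mpow D c).mulVec (X (t i) ω)) μ := by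
  intro c hc m t ht
  have hK (x : ℝ) : mpowPos (D - (2⁻¹ : ℝ) • 1) (c * x)
      = c ^ (-(2⁻¹ : ℝ)) • (mpow D c * mpowPos (D - (2⁻¹ : ℝ) • 1) x) := by
    rw [mpowPos_mul _ hc, mpow_sub_smul_one_s18 _ _ hc, smul_mul_assoc]
  have hXc : Measurable fun ω i => X (c * t i) ω := by fun_prop
  have hMX : Measurable fun ω i => mpow D c *ᵥ X (t i) ω := by fun_prop
  have := Measure.isProbabilityMeasure_map (μ := μ) hXc.aemeasurable
  have := Measure.isProbabilityMeasure_map (μ := μ) hMX.aemeasurable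
  refine Measure.ext_of_map_sum_dotProduct fun a => ?_
  rw [Measure.map_map (by fun_prop) hXc, Measure.map_map (by fun_prop) hMX]
  simp only [Function.comp_def, dotProduct_mulVec, ← mulVec_transpose]
  rw [hgauss m _ (fun i => mul_nonneg hc.le (ht i)), hgauss m t ht]
  congr 2
  refine Finset.sum_congr rfl fun i _ => Finset.sum_congr rfl fun j _ => ?_
  exact wienerCov_mul_mul hc hK (ht i) (ht j) (a i) (a j)

/-- RL-OFBM is operator self-similar with exponent `D`.
The Wiener-integral definition `X(t) = ∫_0^t (t-u)^{D-I/2} dW(u)` is encoded through its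
distributional content: every finite linear functional of the process is a centered Gaussian
whose variance is given by the covariance kernel of the Wiener integral. -/
theorem RL_OFBM_operator_self_similar (d : ℕ) (D : Matrix (Fin d) (Fin d) ℝ)
    (hmin : 1 / 2 < specMin D) (hmax : specMax D < 1)
    {Ω : Type*} [MeasurableSpace Ω] (μ : Measure Ω) [IsProbabilityMeasure μ]
    (X : ℝ → Ω → (Fin d → ℝ)) (hXmeas : ∀ t, Measurable (X t))
    (hgauss : ∀ (m : ℕ) (t : Fin m → ℝ), (∀ i, 0 ≤ t i) → ∀ a : Fin m → (Fin d → ℝ),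
      Measure.map (fun ω => ∑ i, a i ⬝ᵥ X (t i) ω) μ =
        gaussianReal 0
          (Real.toNNReal (∑ i, ∑ j,
            ∫ u in Set.Ioc (0 : ℝ) (min (t i) (t j)),
              ((mpowPos (D - (2⁻¹ : ℝ) • 1) (t i - u)).transpose.mulVec (a i)) ⬝ᵥ
                ((mpowPos (D - (2⁻¹ : ℝ) • 1) (t j - u)).transpose.mulVec (a j))))) :
    ∀ c : ℝ, 0 < c → ∀ (m : ℕ) (t : Fin m → ℝ), (∀ i, 0 ≤ t i) →
      Measure.map (fun ω => fun i => X (c * t i) ω) μ =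
        Measure.map (fun ω => fun i => (mpow D c).mulVec (X (t i) ω)) μ :=
  RL_OFBM_operator_self_similar_general d D μ X hXmeas hgauss
end
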